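/- Let H > 0 and let q : [0,1]² × [−H, 0] → ℝ be continuously differentiable. Then for each (x, y), |(1/H)·∫_{−H}^{0} (z + H/2)·q(x,y,z) dz| ≤ (H/8)·∫_{−H}^{0} |∂_z q(x,y,z)| dz. -/

import Mathlib

/-!
The antiderivative `(z - a) * (z - b) / 2` of the weight `z - (a + b) / 2` vanishes at both
endpoints, so integrating by parts moves the derivative onto `f` with no boundary terms, and
this kernel is bounded by `(b - a) ^ 2 / 8` on the interval (its value at the midpoint).
-/

open Set MeasureTheory intervalIntegral

lemma abs_mul_sub_div_two_le {a b z : ℝ} (hz : z ∈ Icc a b) :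
    |(z - a) * (z - b) / 2| ≤ (b - a) ^ 2 / 8 := by
  obtain ⟨haz, hzb⟩ := hz
  rw [abs_le]
  constructor <;> nlinarith [sq_nonneg (z - (a + b) / 2)]

lemma integral_sub_midpoint_mul_eq {a b : ℝ} {f f' : ℝ → ℝ}
    (hf : ∀ z ∈ uIcc a b, HasDerivAt f (f' z) z) (hf' : IntervalIntegrable f' volume a b) :
    ∫ z in a..b, (z - (a + b) / 2) * f z = -∫ z in a..b, (z - a) * (z - b) / 2 * f' z := by
  have hkernel : ∀ z ∈ uIcc a b,
      HasDerivAt (fun z => (z - a) * (z - b) / 2) (z - (a + b) / 2) z := fun z _ =>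
    ((((hasDerivAt_id' z).sub_const a).mul ((hasDerivAt_id' z).sub_const b)).div_const 2
      ).congr_deriv (by ring)
  have hweight : IntervalIntegrable (fun z => z - (a + b) / 2) volume a b :=
    (continuous_id.sub continuous_const).intervalIntegrable a b
  rw [integral_mul_deriv_eq_deriv_mul hkernel hf hweight hf']
  simp

lemma abs_integral_mul_sub_div_two_le {a b : ℝ} (hab : a ≤ b) {g : ℝ → ℝ}
    (hg : IntervalIntegrable g volume a b) :
    |∫ z in a..b, (z - a) * (z - b) / 2 * g z| ≤ (b - a) ^ 2 / 8 * ∫ z in a..b, |g z| := by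
  rw [← Real.norm_eq_abs, ← intervalIntegral.integral_const_mul]
  refine norm_integral_le_of_norm_le hab (ae_of_all _ fun z hz => ?_) (hg.abs.const_mul _)
  rw [Real.norm_eq_abs, abs_mul]
  exact mul_le_mul_of_nonneg_right (abs_mul_sub_div_two_le (Ioc_subset_Icc_self hz))
    (abs_nonneg _)

lemma abs_average_sub_midpoint_mul_le_of_le {a b : ℝ} (hab : a ≤ b) {f f' : ℝ → ℝ}
    (hf : ∀ z ∈ uIcc a b, HasDerivAt f (f' z) z) (hf' : IntervalIntegrable f' volume a b) :
    |(b - a)⁻¹ * ∫ z in a..b, (z - (a + b) / 2) * f z| ≤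
      (b - a) / 8 * ∫ z in a..b, |f' z| := by
  have hba : 0 ≤ b - a := sub_nonneg.mpr hab
  rw [integral_sub_midpoint_mul_eq hf hf', abs_mul, abs_neg, abs_of_nonneg (inv_nonneg.mpr hba)]
  calc (b - a)⁻¹ * |∫ z in a..b, (z - a) * (z - b) / 2 * f' z|
      ≤ (b - a)⁻¹ * ((b - a) ^ 2 / 8 * ∫ z in a..b, |f' z|) :=
        mul_le_mul_of_nonneg_left (abs_integral_mul_sub_div_two_le hab hf') (inv_nonneg.mpr hba)
    _ = (b - a) / 8 * ∫ z in a..b, |f' z| := by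
        linear_combination (∫ z in a..b, |f' z|) / 8 * inv_mul_mul_self (b - a)

/-- Both sides are unchanged when `a` and `b` are swapped. -/
lemma abs_average_sub_midpoint_mul_le {a b : ℝ} {f f' : ℝ → ℝ}
    (hf : ∀ z ∈ uIcc a b, HasDerivAt f (f' z) z) (hf' : IntervalIntegrable f' volume a b) :
    |(b - a)⁻¹ * ∫ z in a..b, (z - (a + b) / 2) * f z| ≤
      (b - a) / 8 * ∫ z in a..b, |f' z| := by
  rcases le_total a b with hab | hba
  · exact abs_average_sub_midpoint_mul_le_of_le hab hf hf'
  · have h := abs_average_sub_midpoint_mul_le_of_le hba (uIcc_comm a b ▸ hf) hf'.symm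
    rw [add_comm b a] at h
    simp only [integral_symm b a, ← neg_sub a b, inv_neg, neg_div, mul_neg, neg_mul, neg_neg]
    exact h

theorem pointwise_average_inequality_general (H : ℝ)
    (q : ℝ × ℝ × ℝ → ℝ) (hq : ContDiff ℝ 1 q) :
    ∀ x y : ℝ,
      |(1 / H) * ∫ z in (-H)..0, (z + H / 2) * q (x, y, z)| ≤
        (H / 8) * ∫ z in (-H)..0, |deriv (fun z => q (x, y, z)) z| := by
  intro x y
  have hqz : ContDiff ℝ 1 (fun z => q (x, y, z)) :=
    hq.comp (contDiff_const.prodMk (contDiff_const.prodMk contDiff_id))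
  have h := abs_average_sub_midpoint_mul_le (a := -H) (b := 0)
    (fun z _ => ((hqz.differentiable one_ne_zero) z).hasDerivAt)
    ((hqz.continuous_deriv le_rfl).intervalIntegrable _ _)
  simpa [sub_eq_add_neg, neg_div] using h

theorem pointwise_average_inequality (H : ℝ) (hH : 0 < H)
    (q : ℝ × ℝ × ℝ → ℝ) (hq : ContDiff ℝ 1 q) :
    ∀ x y : ℝ,
      |(1 / H) * ∫ z in (-H)..0, (z + H / 2) * q (x, y, z)| ≤
        (H / 8) * ∫ z in (-H)..0, |deriv (fun z => q (x, y, z)) z| :=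
  pointwise_average_inequality_general H q hq
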